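/- arXiv:2408.02038 — 3 statements merged into one kernel-verified Lean document; each statement's English description precedes it below -/
import Mathlib

section
/- Let 𝒜 be an arrangement of affine hyperplanes in V = 𝕂^ℓ. If 𝒜 = ∅ then χ(𝒜, t) = t^ℓ. If H ∈ 𝒜, then χ(𝒜, t) = χ(𝒜 ∖ {H}, t) − χ(𝒜^H, t), where 𝒜 ∖ {H} is the deletion and 𝒜^H = {H ∩ K : K ∈ 𝒜, K ⊉ H, H ∩ K ≠ ∅} is the restriction of 𝒜 to H, viewed as an arrangement in the (ℓ−1)-dimensional affine space H. -/
/-- A subset of a vector space is an affine hyperplane if it is the level set of a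
nonzero linear form. -/
def IsAffineHyperplane (𝕂 : Type*) {V : Type*} [Field 𝕂] [AddCommGroup V] [Module 𝕂 V]
    (S : Set V) : Prop :=
  ∃ (α : V →ₗ[𝕂] 𝕂) (b : 𝕂), α ≠ 0 ∧ S = {x | α x = b}

open Classical in
/-- The intersection poset of an arrangement `H` inside the ambient space `W`:
the collection of all nonempty intersections `W ∩ ⋂ i ∈ I, H i` (for `I = ∅` this is `W`). -/
noncomputable def interPoset {V : Type*} {ι : Type*} [Fintype ι] (W : Set V) (H : ι → Set V) :
    Finset (Set V) :=
  ((Finset.univ : Finset (Finset ι)).image fun I => W ∩ ⋂ i ∈ I, H i).filter fun X => X.Nonempty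

open Classical in
/-- The Möbius function of the intersection poset `L`, ordered by reverse inclusion,
with minimal element `W`:  `μ W = 1` and `μ X = - ∑_{Z < X} μ Z`, where `Z < X` means
`Z ⊋ X` (as sets). -/
noncomputable def mobiusIn {V : Type*} (L : Finset (Set V)) (W : Set V) (X : Set V) : ℤ :=
  if X = W then 1
  else - ∑ Z ∈ (L.filter fun Z => X ⊂ Z).attach,
    mobiusIn L W Z.1
termination_by (L.filter fun Z => X ⊂ Z).card
decreasing_by
  have hZ : Z.1 ∈ L.filter fun Y => X ⊂ Y := Z.2
  rw [Finset.mem_filter] at hZ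
  apply Finset.card_lt_card
  rw [Finset.ssubset_iff_of_subset]
  · refine ⟨Z.1, Finset.mem_filter.mpr ⟨hZ.1, hZ.2⟩, ?_⟩
    intro hmem
    exact (lt_irrefl _ (Finset.mem_filter.mp hmem).2)
  · intro Y hY
    rw [Finset.mem_filter] at hY ⊢
    exact ⟨hY.1, hZ.2.trans hY.2⟩

/-- The dimension of a subset of a vector space, as the dimension of its affine span. -/
noncomputable def affDim (𝕂 : Type*) {V : Type*} [Field 𝕂] [AddCommGroup V] [Module 𝕂 V]
    (X : Set V) : ℕ :=
  Module.finrank 𝕂 (affineSpan 𝕂 X).direction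

/-- The characteristic polynomial `χ(𝒜, t) = ∑_{X ∈ L(𝒜)} μ(X) t^{dim X}` of the
arrangement `H` in the ambient affine space `W`. -/
noncomputable def charPoly (𝕂 : Type*) {V : Type*} [Field 𝕂] [AddCommGroup V] [Module 𝕂 V]
    {ι : Type*} [Fintype ι] (W : Set V) (H : ι → Set V) : Polynomial ℤ :=
  ∑ X ∈ interPoset W H,
    Polynomial.C (mobiusIn (interPoset W H) W X) * Polynomial.X ^ affDim 𝕂 X

section Aux

open Classical Finset

variable {V : Type*} {ι : Type*} [Fintype ι] {W X : Set V} {H : ι → Set V}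

lemma mem_interPoset_iff :
    X ∈ interPoset W H ↔ (∃ I : Finset ι, W ∩ ⋂ i ∈ I, H i = X) ∧ X.Nonempty := by
  classical
  simp [interPoset, Finset.mem_filter, Finset.mem_image]

lemma nonempty_of_mem_interPoset (hX : X ∈ interPoset W H) : X.Nonempty :=
  (mem_interPoset_iff.mp hX).2

lemma subset_W_of_mem_interPoset (hX : X ∈ interPoset W H) : X ⊆ W := by
  obtain ⟨⟨I, hI⟩, -⟩ := mem_interPoset_iff.mp hX
  rw [← hI]; exact Set.inter_subset_left

lemma W_mem_interPoset (hW : W.Nonempty) : W ∈ interPoset W H := by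
  refine mem_interPoset_iff.mpr ⟨⟨∅, by simp⟩, hW⟩

open Classical in
noncomputable def whitF (W : Set V) (H : ι → Set V) (X : Set V) : ℤ :=
  ∑ I ∈ Finset.univ.filter (fun I : Finset ι => W ∩ ⋂ i ∈ I, H i = X), (-1 : ℤ) ^ I.card

lemma subset_val_iff (hXW : X ⊆ W) (I : Finset ι) :
    X ⊆ W ∩ ⋂ i ∈ I, H i ↔ I ⊆ Finset.univ.filter (fun i => X ⊆ H i) := by
  classical
  constructor
  · intro h i hi
    simp only [Finset.mem_filter, Finset.mem_univ, true_and]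
    intro x hx
    have := h hx
    rw [Set.mem_inter_iff, Set.mem_iInter₂] at this
    exact this.2 i hi
  · intro h
    refine Set.subset_inter hXW ?_
    intro x hx
    rw [Set.mem_iInter₂]
    intro i hi
    have := h hi
    simp only [Finset.mem_filter, Finset.mem_univ, true_and] at this
    exact this hx

lemma whitF_recursion (h : ∀ i, ¬ W ⊆ H i) (hX : X ∈ interPoset W H) :
    ∑ Z ∈ (interPoset W H).filter (fun Z => X ⊆ Z), whitF W H Z
      = if X = W then 1 else 0 := by
  classical
  have hXW : X ⊆ W := subset_W_of_mem_interPoset hX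
  have hXne : X.Nonempty := nonempty_of_mem_interPoset hX
  have hmaps : ∀ I ∈ Finset.univ.filter (fun I : Finset ι => X ⊆ W ∩ ⋂ i ∈ I, H i),
      (W ∩ ⋂ i ∈ I, H i) ∈ (interPoset W H).filter (fun Z => X ⊆ Z) := by
    intro I hI
    rw [Finset.mem_filter] at hI ⊢
    exact ⟨mem_interPoset_iff.mpr ⟨⟨I, rfl⟩, hXne.mono hI.2⟩, hI.2⟩
  have key := Finset.sum_fiberwise_of_maps_to hmaps (fun I => (-1 : ℤ) ^ I.card)
  have step : ∀ Z ∈ (interPoset W H).filter (fun Z => X ⊆ Z),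
      whitF W H Z = ∑ I ∈ (Finset.univ.filter
          (fun I : Finset ι => X ⊆ W ∩ ⋂ i ∈ I, H i)).filter
          (fun I => W ∩ ⋂ i ∈ I, H i = Z), (-1 : ℤ) ^ I.card := by
    intro Z hZ
    rw [Finset.mem_filter] at hZ
    unfold whitF
    apply Finset.sum_congr _ (fun _ _ => rfl)
    ext I
    simp only [Finset.mem_filter, Finset.mem_univ, true_and]
    constructor
    · intro hI; exact ⟨hI ▸ hZ.2, hI⟩
    · intro hI; exact hI.2
  rw [Finset.sum_congr rfl step, key]
  have hpow : Finset.univ.filter (fun I : Finset ι => X ⊆ W ∩ ⋂ i ∈ I, H i)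
      = (Finset.univ.filter (fun i => X ⊆ H i)).powerset := by
    ext I
    simp only [Finset.mem_filter, Finset.mem_univ, true_and, Finset.mem_powerset]
    exact subset_val_iff hXW I
  rw [hpow, Finset.sum_powerset_neg_one_pow_card]
  have hiff : (Finset.univ.filter (fun i => X ⊆ H i) = ∅) ↔ (X = W) := by
    constructor
    · intro hS
      obtain ⟨⟨I, hI⟩, -⟩ := mem_interPoset_iff.mp hX
      have hIempty : I = ∅ := by
        rw [← Finset.subset_empty, ← hS]
        intro i hi
        simp only [Finset.mem_filter, Finset.mem_univ, true_and]
        rw [← hI]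
        exact Set.inter_subset_right.trans (Set.biInter_subset_of_mem hi)
      rw [hIempty] at hI
      simpa using hI.symm
    · intro hXW'
      rw [Finset.eq_empty_iff_forall_notMem]
      intro i hi
      simp only [Finset.mem_filter, Finset.mem_univ, true_and] at hi
      exact h i (hXW' ▸ hi)
  rw [if_congr hiff rfl rfl]


lemma filter_W_subset_eq (hW : W.Nonempty) :
    (interPoset W H).filter (fun Z => W ⊆ Z) = {W} := by
  classical
  ext Z
  simp only [Finset.mem_filter, Finset.mem_singleton]
  constructor
  · intro ⟨hZ, hWZ⟩
    exact (subset_antisymm (subset_W_of_mem_interPoset hZ) hWZ)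
  · rintro rfl
    exact ⟨W_mem_interPoset hW, subset_rfl⟩

lemma filter_superset_eq_insert (hX : X ∈ interPoset W H) :
    (interPoset W H).filter (fun Z => X ⊆ Z)
      = insert X ((interPoset W H).filter (fun Z => X ⊂ Z)) := by
  classical
  ext Z
  simp only [Finset.mem_filter, Finset.mem_insert]
  constructor
  · intro ⟨hZ, hXZ⟩
    rcases eq_or_ne Z X with rfl | hne
    · exact Or.inl rfl
    · exact Or.inr ⟨hZ, ssubset_of_subset_of_ne hXZ (Ne.symm hne)⟩
  · rintro (rfl | ⟨hZ, hXZ⟩)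
    · exact ⟨hX, subset_rfl⟩
    · exact ⟨hZ, hXZ.subset⟩

lemma X_not_mem_filter_ssubset :
    X ∉ (interPoset W H).filter (fun Z => X ⊂ Z) := by
  classical
  simp only [Finset.mem_filter]
  rintro ⟨-, h⟩
  exact h.ne rfl

open Classical in
lemma mobius_eq_whitF (h : ∀ i, ¬ W ⊆ H i) (hW : W.Nonempty) (X : Set V)
    (hX : X ∈ interPoset W H) :
    mobiusIn (interPoset W H) W X = whitF W H X := by
  by_cases hXW : X = W
  · subst hXW
    rw [mobiusIn, if_pos rfl]
    have hrec := whitF_recursion h hX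
    rw [filter_W_subset_eq hW, if_pos rfl, Finset.sum_singleton] at hrec
    exact hrec.symm
  · rw [mobiusIn, if_neg hXW]
    have hsum : ∑ Z ∈ ((interPoset W H).filter fun Z => X ⊂ Z).attach,
        mobiusIn (interPoset W H) W Z.1
        = ∑ Z ∈ ((interPoset W H).filter fun Z => X ⊂ Z).attach, whitF W H Z.1 := by
      apply Finset.sum_congr rfl
      intro Z hZmem
      have hZ : Z.1 ∈ (interPoset W H).filter fun Y => X ⊂ Y := Z.2
      rw [Finset.mem_filter] at hZ
      exact mobius_eq_whitF h hW Z.1 hZ.1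
    rw [hsum, Finset.sum_attach]
    have hrec := whitF_recursion h hX
    rw [filter_superset_eq_insert hX,
      Finset.sum_insert X_not_mem_filter_ssubset, if_neg hXW] at hrec
    linarith
termination_by ((interPoset W H).filter fun Z => X ⊂ Z).card
decreasing_by
  have hZ : Z.1 ∈ (interPoset W H).filter fun Y => X ⊂ Y := Z.2
  rw [Finset.mem_filter] at hZ
  apply Finset.card_lt_card
  rw [Finset.ssubset_iff_of_subset]
  · refine ⟨Z.1, Finset.mem_filter.mpr ⟨hZ.1, hZ.2⟩, ?_⟩
    intro hmem
    exact (lt_irrefl _ (Finset.mem_filter.mp hmem).2)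
  · intro Y hY
    rw [Finset.mem_filter] at hY ⊢
    exact ⟨hY.1, hZ.2.trans hY.2⟩



open Classical in
lemma charPoly_eq_whitney (𝕂 : Type*) {V : Type*} [Field 𝕂] [AddCommGroup V] [Module 𝕂 V]
    {ι : Type*} [Fintype ι] {W : Set V} {H : ι → Set V}
    (h : ∀ i, ¬ W ⊆ H i) (hW : W.Nonempty) :
    charPoly 𝕂 W H
      = ∑ I ∈ Finset.univ.filter (fun I : Finset ι => (W ∩ ⋂ i ∈ I, H i).Nonempty),
          Polynomial.C ((-1 : ℤ) ^ I.card) * Polynomial.X ^ affDim 𝕂 (W ∩ ⋂ i ∈ I, H i) := by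
  unfold charPoly
  rw [Finset.sum_congr rfl (fun X hX => by rw [mobius_eq_whitF h hW X hX])]
  have hmaps : ∀ I ∈ Finset.univ.filter (fun I : Finset ι => (W ∩ ⋂ i ∈ I, H i).Nonempty),
      (W ∩ ⋂ i ∈ I, H i) ∈ interPoset W H := by
    intro I hI
    rw [Finset.mem_filter] at hI
    exact mem_interPoset_iff.mpr ⟨⟨I, rfl⟩, hI.2⟩
  rw [← Finset.sum_fiberwise_of_maps_to hmaps
    (fun I => Polynomial.C ((-1 : ℤ) ^ I.card)
      * Polynomial.X ^ affDim 𝕂 (W ∩ ⋂ i ∈ I, H i))]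
  apply Finset.sum_congr rfl
  intro Z hZ
  have hZne : Z.Nonempty := nonempty_of_mem_interPoset hZ
  have hfil : (Finset.univ.filter
        (fun I : Finset ι => (W ∩ ⋂ i ∈ I, H i).Nonempty)).filter
        (fun I => W ∩ ⋂ i ∈ I, H i = Z)
      = Finset.univ.filter (fun I : Finset ι => W ∩ ⋂ i ∈ I, H i = Z) := by
    ext I
    simp only [Finset.mem_filter, Finset.mem_univ, true_and]
    exact ⟨fun h => h.2, fun h => ⟨h ▸ hZne, h⟩⟩
  rw [hfil]
  unfold whitF
  rw [map_sum, Finset.sum_mul]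
  apply Finset.sum_congr rfl
  intro I hI
  rw [Finset.mem_filter] at hI
  rw [hI.2]


end Aux

section Hyp

variable {𝕂 : Type*} {V : Type*} [Field 𝕂] [AddCommGroup V] [Module 𝕂 V] {S T : Set V}

lemma exists_eq_one_of_ne_zero {α : V →ₗ[𝕂] 𝕂} (hα : α ≠ 0) : ∃ u, α u = 1 := by
  obtain ⟨u, hu⟩ : ∃ u, α u ≠ 0 := by
    by_contra hc
    push_neg at hc
    exact hα (LinearMap.ext fun x => by simp [hc x])
  exact ⟨(α u)⁻¹ • u, by simp [inv_mul_cancel₀ hu]⟩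

lemma IsAffineHyperplane.nonempty (h : IsAffineHyperplane 𝕂 S) : S.Nonempty := by
  obtain ⟨α, b, hα, rfl⟩ := h
  obtain ⟨u, hu⟩ := exists_eq_one_of_ne_zero hα
  exact ⟨b • u, by simp [hu]⟩

lemma IsAffineHyperplane.not_univ_subset (h : IsAffineHyperplane 𝕂 S) :
    ¬ (Set.univ : Set V) ⊆ S := by
  obtain ⟨α, b, hα, rfl⟩ := h
  intro hsub
  obtain ⟨u, hu⟩ := exists_eq_one_of_ne_zero hα
  have h0 : α 0 = b := hsub (Set.mem_univ 0)
  have h1 : α u = b := hsub (Set.mem_univ u)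
  rw [map_zero] at h0
  rw [hu] at h1
  exact one_ne_zero (h1.trans h0.symm)

lemma IsAffineHyperplane.eq_of_subset (hS : IsAffineHyperplane 𝕂 S)
    (hT : IsAffineHyperplane 𝕂 T) (hsub : S ⊆ T) : S = T := by
  obtain ⟨α, b, hα, rfl⟩ := hS
  obtain ⟨β, c, hβ, rfl⟩ := hT
  obtain ⟨u, hu⟩ := exists_eq_one_of_ne_zero hα
  have key : ∀ x : V, β x = c + (α x - b) * β u := by
    intro x
    have hx : x - (α x) • u + b • u ∈ {y | α y = b} := by
      simp [map_sub, map_add, map_smul, hu]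
    have hβx := hsub hx
    simp only [Set.mem_setOf_eq, map_sub, map_add, map_smul, smul_eq_mul] at hβx
    linear_combination hβx
  have hβu : β u ≠ 0 := by
    intro h'
    apply hβ
    apply LinearMap.ext
    intro x
    have h0 := key 0
    have hx := key x
    rw [h'] at h0 hx
    simp only [map_zero, mul_zero, add_zero] at h0 hx
    rw [LinearMap.zero_apply, hx, ← h0]
  ext x
  simp only [Set.mem_setOf_eq]
  constructor
  · intro hx
    rw [key x, hx]
    ring
  · intro hx
    have h0 : (α x - b) * β u = 0 := by linear_combination hx - key x
    rcases mul_eq_zero.mp h0 with h1 | h1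
    · linear_combination h1
    · exact absurd h1 hβu

end Hyp

lemma affDim_univ (𝕂 : Type*) [Field 𝕂] (ℓ : ℕ) :
    affDim 𝕂 (Set.univ : Set (Fin ℓ → 𝕂)) = ℓ := by
  unfold affDim
  rw [AffineSubspace.span_univ, AffineSubspace.direction_top, finrank_top,
    Module.finrank_pi, Fintype.card_fin]

lemma charPoly_empty (𝕂 : Type*) [Field 𝕂] (ℓ : ℕ) :
    charPoly 𝕂 (Set.univ : Set (Fin ℓ → 𝕂)) (Fin.elim0 : Fin 0 → Set (Fin ℓ → 𝕂))
      = Polynomial.X ^ ℓ := by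
  classical
  have hL : interPoset (Set.univ : Set (Fin ℓ → 𝕂)) (Fin.elim0 : Fin 0 → Set (Fin ℓ → 𝕂))
      = {Set.univ} := by
    ext X
    rw [mem_interPoset_iff, Finset.mem_singleton]
    constructor
    · rintro ⟨⟨I, hI⟩, -⟩
      rw [← hI]
      ext x
      simp only [Set.mem_inter_iff, Set.mem_univ, true_and, Set.mem_iInter]
      refine ⟨fun _ => trivial, fun _ i => i.elim0⟩
    · rintro rfl
      exact ⟨⟨∅, by simp⟩, ⟨0, trivial⟩⟩
  unfold charPoly
  rw [hL, Finset.sum_singleton, mobiusIn, if_pos rfl, Polynomial.C_1, one_mul, affDim_univ]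

lemma biInter_insert {V : Type*} {n : ℕ} (H : Fin n → Set V) (i₀ : Fin n)
    (s : Finset (Fin n)) :
    (⋂ i ∈ insert i₀ s, H i) = H i₀ ∩ ⋂ i ∈ s, H i := by
  ext x
  simp only [Set.mem_iInter, Finset.mem_insert, Set.mem_inter_iff]
  constructor
  · intro h
    exact ⟨h i₀ (Or.inl rfl), fun i hi => h i (Or.inr hi)⟩
  · rintro ⟨h0, h⟩ i (rfl | hi)
    · exact h0
    · exact h i hi

lemma charPoly_del_res {𝕂 : Type*} [Field 𝕂] {ℓ : ℕ} (n : ℕ) (H : Fin n → Set (Fin ℓ → 𝕂))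
    (hH : ∀ i, IsAffineHyperplane 𝕂 (H i)) (hinj : Function.Injective H) (i₀ : Fin n) :
    charPoly 𝕂 Set.univ H
      = charPoly 𝕂 Set.univ (fun i : {i : Fin n // i ≠ i₀} => H i.1)
        - charPoly 𝕂 (H i₀) (fun i : {i : Fin n // i ≠ i₀} => H i.1) := by
  classical
  have hWne : (Set.univ : Set (Fin ℓ → 𝕂)).Nonempty := ⟨0, trivial⟩
  have hi₀ne : (H i₀).Nonempty := (hH i₀).nonempty
  have hressub : ∀ i : {i : Fin n // i ≠ i₀}, ¬ H i₀ ⊆ H i.1 := by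
    intro i hsub
    exact i.2 (hinj ((hH i₀).eq_of_subset (hH i.1) hsub)).symm
  rw [charPoly_eq_whitney 𝕂 (fun i => (hH i).not_univ_subset) hWne,
      charPoly_eq_whitney 𝕂 (H := fun i : {i : Fin n // i ≠ i₀} => H i.1)
        (fun i => (hH i.1).not_univ_subset) hWne,
      charPoly_eq_whitney 𝕂 (H := fun i : {i : Fin n // i ≠ i₀} => H i.1) hressub hi₀ne]
  rw [← Finset.sum_filter_add_sum_filter_not
    (Finset.univ.filter fun I : Finset (Fin n) =>
      ((Set.univ : Set (Fin ℓ → 𝕂)) ∩ ⋂ i ∈ I, H i).Nonempty) (fun I => i₀ ∉ I)]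
  have hmapInter : ∀ J : Finset {i : Fin n // i ≠ i₀},
      (⋂ i ∈ J.map (Function.Embedding.subtype _), H i) = ⋂ j ∈ J, H j.1 := by
    intro J; ext x
    simp only [Set.mem_iInter, Finset.mem_map, Function.Embedding.coe_subtype]
    constructor
    · intro h j hj; exact h j.1 ⟨j, hj, rfl⟩
    · rintro h i ⟨j, hj, rfl⟩; exact h j hj
  have hsubmap : ∀ I : Finset (Fin n), i₀ ∉ I →
      (I.subtype (· ≠ i₀)).map (Function.Embedding.subtype _) = I := by
    intro I hI
    rw [Finset.subtype_map]
    apply Finset.filter_true_of_mem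
    intro i hi
    rintro rfl
    exact hI hi
  have hdel : (∑ I ∈ (Finset.univ.filter fun I : Finset (Fin n) =>
        ((Set.univ : Set (Fin ℓ → 𝕂)) ∩ ⋂ i ∈ I, H i).Nonempty).filter (fun I => i₀ ∉ I),
        Polynomial.C ((-1 : ℤ) ^ I.card)
          * Polynomial.X ^ affDim 𝕂 ((Set.univ : Set (Fin ℓ → 𝕂)) ∩ ⋂ i ∈ I, H i))
      = ∑ J ∈ Finset.univ.filter (fun J : Finset {i : Fin n // i ≠ i₀} =>
          ((Set.univ : Set (Fin ℓ → 𝕂)) ∩ ⋂ j ∈ J, H j.1).Nonempty),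
        Polynomial.C ((-1 : ℤ) ^ J.card)
          * Polynomial.X ^ affDim 𝕂 ((Set.univ : Set (Fin ℓ → 𝕂)) ∩ ⋂ j ∈ J, H j.1) := by
    apply Finset.sum_nbij' (i := fun I => I.subtype (· ≠ i₀))
      (j := fun J => J.map (Function.Embedding.subtype _))
    · intro I hI
      rw [Finset.mem_filter, Finset.mem_filter] at hI
      obtain ⟨⟨-, hne⟩, hi₀⟩ := hI
      rw [Finset.mem_filter]
      refine ⟨Finset.mem_univ _, ?_⟩
      rw [← hmapInter, hsubmap I hi₀]
      exact hne
    · intro J hJ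
      rw [Finset.mem_filter] at hJ
      rw [Finset.mem_filter, Finset.mem_filter]
      refine ⟨⟨Finset.mem_univ _, ?_⟩, ?_⟩
      · rw [hmapInter]; exact hJ.2
      · simp only [Finset.mem_map, Function.Embedding.coe_subtype]
        rintro ⟨j, -, hj⟩
        exact j.2 hj
    · intro I hI
      rw [Finset.mem_filter] at hI
      exact hsubmap I hI.2
    · intro J hJ
      ext j
      simp only [Finset.mem_subtype, Finset.mem_map, Function.Embedding.coe_subtype]
      constructor
      · rintro ⟨a, ha, haj⟩
        rwa [Subtype.ext haj] at ha
      · intro hj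
        exact ⟨j, hj, rfl⟩
    · intro I hI
      rw [Finset.mem_filter] at hI
      have h1 := hsubmap I hI.2
      have h2 : (⋂ j ∈ I.subtype (· ≠ i₀), H j.1) = ⋂ i ∈ I, H i := by
        rw [← hmapInter, h1]
      have h3 : (I.subtype (· ≠ i₀)).card = I.card := by
        conv_rhs => rw [← h1]
        rw [Finset.card_map]
      rw [h2, h3]
  rw [hdel]
  have hresb : (∑ I ∈ (Finset.univ.filter fun I : Finset (Fin n) =>
        ((Set.univ : Set (Fin ℓ → 𝕂)) ∩ ⋂ i ∈ I, H i).Nonempty).filter (fun I => ¬ i₀ ∉ I),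
        Polynomial.C ((-1 : ℤ) ^ I.card)
          * Polynomial.X ^ affDim 𝕂 ((Set.univ : Set (Fin ℓ → 𝕂)) ∩ ⋂ i ∈ I, H i))
      = ∑ J ∈ Finset.univ.filter (fun J : Finset {i : Fin n // i ≠ i₀} =>
          (H i₀ ∩ ⋂ j ∈ J, H j.1).Nonempty),
        -(Polynomial.C ((-1 : ℤ) ^ J.card)
          * Polynomial.X ^ affDim 𝕂 (H i₀ ∩ ⋂ j ∈ J, H j.1)) := by
    apply Finset.sum_nbij' (i := fun I => (I.erase i₀).subtype (· ≠ i₀))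
      (j := fun J => insert i₀ (J.map (Function.Embedding.subtype _)))
    · intro I hI
      rw [Finset.mem_filter, Finset.mem_filter, not_not] at hI
      obtain ⟨⟨-, hne⟩, hi₀⟩ := hI
      have hIeq : insert i₀ (((I.erase i₀).subtype (· ≠ i₀)).map
          (Function.Embedding.subtype _)) = I := by
        rw [hsubmap _ (Finset.notMem_erase i₀ I), Finset.insert_erase hi₀]
      rw [Finset.mem_filter]
      refine ⟨Finset.mem_univ _, ?_⟩
      rw [← hmapInter, ← biInter_insert, hIeq]
      rwa [Set.univ_inter] at hne
    · intro J hJ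
      rw [Finset.mem_filter] at hJ
      rw [Finset.mem_filter, Finset.mem_filter, not_not]
      refine ⟨⟨Finset.mem_univ _, ?_⟩, Finset.mem_insert_self _ _⟩
      rw [Set.univ_inter, biInter_insert, hmapInter]
      exact hJ.2
    · intro I hI
      rw [Finset.mem_filter, not_not] at hI
      rw [hsubmap _ (Finset.notMem_erase i₀ I), Finset.insert_erase hI.2]
    · intro J hJ
      have h0 : i₀ ∉ J.map (Function.Embedding.subtype _) := by
        simp only [Finset.mem_map, Function.Embedding.coe_subtype]
        rintro ⟨j, -, hj⟩
        exact j.2 hj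
      rw [Finset.erase_insert h0]
      ext j
      simp only [Finset.mem_subtype, Finset.mem_map, Function.Embedding.coe_subtype]
      constructor
      · rintro ⟨a, ha, haj⟩
        rwa [Subtype.ext haj] at ha
      · intro hj
        exact ⟨j, hj, rfl⟩
    · intro I hI
      rw [Finset.mem_filter, not_not] at hI
      have hIeq : insert i₀ (((I.erase i₀).subtype (· ≠ i₀)).map
          (Function.Embedding.subtype _)) = I := by
        rw [hsubmap _ (Finset.notMem_erase i₀ I), Finset.insert_erase hI.2]
      have h2 : H i₀ ∩ (⋂ j ∈ (I.erase i₀).subtype (· ≠ i₀), H j.1)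
          = (Set.univ : Set (Fin ℓ → 𝕂)) ∩ ⋂ i ∈ I, H i := by
        rw [Set.univ_inter, ← hmapInter, ← biInter_insert, hIeq]
      have h3 : ((I.erase i₀).subtype (· ≠ i₀)).card + 1 = I.card := by
        have := hsubmap _ (Finset.notMem_erase i₀ I)
        calc ((I.erase i₀).subtype (· ≠ i₀)).card + 1
            = (((I.erase i₀).subtype (· ≠ i₀)).map
                (Function.Embedding.subtype _)).card + 1 := by rw [Finset.card_map]
          _ = (I.erase i₀).card + 1 := by rw [this]
          _ = I.card := Finset.card_erase_add_one hI.2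
      rw [h2, ← h3, pow_succ]
      simp only [map_mul, Polynomial.C_neg, Polynomial.C_1]
      ring
  rw [hresb, Finset.sum_neg_distrib]
  ring

/-- **Deletion–restriction for the characteristic polynomial.**
For the empty arrangement in `𝕂^ℓ` we have `χ(∅, t) = t^ℓ`, and for a hyperplane
`H i₀` of an arrangement `𝒜` we have `χ(𝒜, t) = χ(𝒜 ∖ {H i₀}, t) - χ(𝒜^{H i₀}, t)`,
where the restriction `𝒜^{H i₀}` is the arrangement `{H i₀ ∩ H i : i ≠ i₀}` in the
`(ℓ-1)`-dimensional affine space `H i₀` (its intersection poset consists of all the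
nonempty sets `H i₀ ∩ ⋂_{i ∈ I} H i`). -/
theorem charPoly_deletion_restriction {𝕂 : Type*} [Field 𝕂] {ℓ : ℕ} :
    (charPoly 𝕂 (Set.univ : Set (Fin ℓ → 𝕂)) (Fin.elim0 : Fin 0 → Set (Fin ℓ → 𝕂))
        = Polynomial.X ^ ℓ) ∧
    ∀ (n : ℕ) (H : Fin n → Set (Fin ℓ → 𝕂)),
      (∀ i, IsAffineHyperplane 𝕂 (H i)) → Function.Injective H →
      ∀ i₀ : Fin n,
        charPoly 𝕂 Set.univ H
          = charPoly 𝕂 Set.univ (fun i : {i : Fin n // i ≠ i₀} => H i.1)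
            - charPoly 𝕂 (H i₀) (fun i : {i : Fin n // i ≠ i₀} => H i.1) :=
  ⟨charPoly_empty 𝕂 ℓ, fun n H hH hinj i₀ => charPoly_del_res n H hH hinj i₀⟩
end

section
/- (Zaslavsky) Let 𝒜 = {H₁, …, Hₙ} be an arrangement of affine hyperplanes in ℝ^ℓ. Then the number of chambers of 𝒜 satisfies #ch(𝒜) = (−1)^ℓ χ(𝒜, −1). -/
/-- The set of chambers of a real arrangement: the connected components of the
complement of the union of the hyperplanes. -/
def chambersOf {V : Type*} [TopologicalSpace V] {ι : Type*} (H : ι → Set V) :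
    Set (Set V) :=
  {C | ∃ x ∈ (⋃ i, H i)ᶜ, C = connectedComponentIn (⋃ i, H i)ᶜ x}

/-!
Both sides obey the same deletion–restriction recursion. Let `r(K, E)` be the number of nonempty
sign cells cut out of an affine subspace `K` by the hyperplanes indexed by `E`. Adding a hyperplane
`H` with `K ⊄ H` splits exactly the cells that meet `H` into two, and a convex cell meets `H` iff
it has points on both sides, so `r(K, E ∪ {H}) = r(K, E) + r(K ∩ H, E)`. By Whitney's formula
`μ(X) = ∑_{⋂ I = X} (-1)^|I|`, the evaluation `χ(-1)` is a signed sum over subfamilies `I` with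
nonempty intersection, and `(-1)^dim K` times this sum satisfies the same recursion because
`dim (K ∩ H) = dim K - 1`. Finally, the cells for the full arrangement are open, convex and
partition the complement of the hyperplanes, so they are its connected components.
-/

open Finset Topology

open scoped Classical

section Mobius

variable {V : Type*}

theorem filter_superset_eq_insert_filter_ssuperset {L : Finset (Set V)} {X : Set V}
    (hX : X ∈ L) : {Z ∈ L | X ⊆ Z} = insert X {Z ∈ L | X ⊂ Z} := by
  ext Z
  simp only [mem_filter, mem_insert, subset_iff_ssubset_or_eq (a := X)]
  constructor
  · rintro ⟨hZ, hXZ | rfl⟩ <;> tauto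
  · rintro (rfl | h) <;> tauto

theorem card_filter_ssuperset_lt {L : Finset (Set V)} {X Z : Set V} (hZ : Z ∈ L) (hXZ : X ⊂ Z) :
    #{Y ∈ L | Z ⊂ Y} < #{Y ∈ L | X ⊂ Y} :=
  card_lt_card <| (ssubset_iff_of_subset (monotone_filter_right L fun _ _ h => hXZ.trans h)).2
    ⟨Z, mem_filter.2 ⟨hZ, hXZ⟩, fun h => (mem_filter.1 h).2.false⟩

theorem sum_mobiusIn_filter_superset {L : Finset (Set V)} {W : Set V} (hL : ∀ Z ∈ L, Z ⊆ W)
    {X : Set V} (hX : X ∈ L) :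
    ∑ Z ∈ L with X ⊆ Z, mobiusIn L W Z = if X = W then 1 else 0 := by
  rw [filter_superset_eq_insert_filter_ssuperset hX,
    sum_insert fun h => (mem_filter.1 h).2.false]
  split_ifs with hXW
  · subst hXW
    have : {Z ∈ L | X ⊂ Z} = ∅ :=
      filter_eq_empty_iff.2 fun Z hZ hXZ => hXZ.not_subset (hL Z hZ)
    rw [this, sum_empty, add_zero, mobiusIn, if_pos rfl]
  · rw [mobiusIn, if_neg hXW, sum_attach _ (mobiusIn L W), neg_add_cancel]

theorem mobiusIn_eq_of_sum_filter_superset {L : Finset (Set V)} {W : Set V}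
    (hL : ∀ Z ∈ L, Z ⊆ W) (g : Set V → ℤ)
    (hg : ∀ X ∈ L, ∑ Z ∈ L with X ⊆ Z, g Z = if X = W then 1 else 0)
    (X : Set V) (hX : X ∈ L) : mobiusIn L W X = g X := by
  have key := (sum_mobiusIn_filter_superset hL hX).trans (hg X hX).symm
  rw [filter_superset_eq_insert_filter_ssuperset hX,
    sum_insert (fun h => (mem_filter.1 h).2.false),
    sum_insert (fun h => (mem_filter.1 h).2.false)] at key
  have hlarger : ∑ Z ∈ L with X ⊂ Z, mobiusIn L W Z = ∑ Z ∈ L with X ⊂ Z, g Z :=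
    sum_congr rfl fun Z hZ =>
      mobiusIn_eq_of_sum_filter_superset hL g hg Z (mem_filter.1 hZ).1
  linarith
termination_by #{Z ∈ L | X ⊂ Z}
decreasing_by exact card_filter_ssuperset_lt (mem_filter.1 hZ).1 (mem_filter.1 hZ).2

variable {ι : Type*} [Fintype ι] {W : Set V} {H : ι → Set V}

theorem mem_interPoset {X : Set V} :
    X ∈ interPoset W H ↔ (∃ I : Finset ι, W ∩ ⋂ i ∈ I, H i = X) ∧ X.Nonempty := by
  simp [interPoset]

theorem subset_of_mem_interPoset {X : Set V} (hX : X ∈ interPoset W H) : X ⊆ W := by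
  obtain ⟨⟨I, rfl⟩, -⟩ := mem_interPoset.1 hX
  exact Set.inter_subset_left

noncomputable def whitneyCoeff (W : Set V) (H : ι → Set V) (X : Set V) : ℤ :=
  ∑ I : Finset ι with W ∩ ⋂ i ∈ I, H i = X, (-1) ^ #I

theorem sum_whitneyCoeff_filter_superset (hWH : ∀ i, ¬ W ⊆ H i) {X : Set V}
    (hX : X ∈ interPoset W H) :
    ∑ Z ∈ interPoset W H with X ⊆ Z, whitneyCoeff W H Z = if X = W then 1 else 0 := by
  set J : Finset ι := {i | X ⊆ H i}
  have hsupset : ∀ I : Finset ι,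
      W ∩ ⋂ i ∈ I, H i ∈ {Z ∈ interPoset W H | X ⊆ Z} ↔ I ∈ J.powerset := by
    intro I
    have hXW := subset_of_mem_interPoset hX
    simp only [mem_filter, mem_powerset, J, Finset.subset_iff, mem_univ, true_and,
      Set.subset_inter_iff, Set.subset_iInter_iff, hXW]
    exact ⟨fun h => h.2, fun h => ⟨mem_interPoset.2 ⟨⟨I, rfl⟩, (mem_interPoset.1 hX).2.mono
      (Set.subset_inter hXW (Set.subset_iInter₂ h))⟩, h⟩⟩
  have hJ : J = ∅ ↔ X = W := by
    obtain ⟨⟨I, rfl⟩, -⟩ := mem_interPoset.1 hX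
    constructor
    · intro hJ
      have hI : I = ∅ := subset_empty.1 (hJ ▸ mem_powerset.1 ((hsupset I).1
        (mem_filter.2 ⟨hX, subset_rfl⟩)))
      simp [hI]
    · intro hXW
      refine eq_empty_iff_forall_notMem.2 fun i hi => hWH i ?_
      rw [← hXW]
      exact (mem_filter.1 hi).2
  simp only [whitneyCoeff]
  rw [sum_fiberwise_eq_sum_filter, filter_congr fun I _ => hsupset I, filter_mem_eq_inter,
    univ_inter, sum_powerset_neg_one_pow_card, if_congr hJ rfl rfl]

theorem mobiusIn_interPoset_eq_whitneyCoeff (hWH : ∀ i, ¬ W ⊆ H i) {X : Set V}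
    (hX : X ∈ interPoset W H) : mobiusIn (interPoset W H) W X = whitneyCoeff W H X :=
  mobiusIn_eq_of_sum_filter_superset (fun _ => subset_of_mem_interPoset) _
    (fun _ => sum_whitneyCoeff_filter_superset hWH) X hX

end Mobius

section Whitney

variable (𝕂 : Type*) {V : Type*} [Field 𝕂] [AddCommGroup V] [Module 𝕂 V] {ι : Type*}

noncomputable def whitneySum (W : Set V) (H : ι → Set V) (E : Finset ι) : ℤ :=
  ∑ I ∈ E.powerset with (W ∩ ⋂ i ∈ I, H i).Nonempty, (-1) ^ (#I + affDim 𝕂 (W ∩ ⋂ i ∈ I, H i))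

variable {𝕂}

theorem charPoly_eval_neg_one [Fintype ι] {W : Set V} {H : ι → Set V} (hWH : ∀ i, ¬ W ⊆ H i) :
    (charPoly 𝕂 W H).eval (-1) = whitneySum 𝕂 W H univ := by
  have hfiber : ∀ X ∈ interPoset W H, mobiusIn (interPoset W H) W X * (-1) ^ affDim 𝕂 X
      = ∑ I : Finset ι with W ∩ ⋂ i ∈ I, H i = X,
          (-1) ^ (#I + affDim 𝕂 (W ∩ ⋂ i ∈ I, H i)) := by
    intro X hX
    rw [mobiusIn_interPoset_eq_whitneyCoeff hWH hX, whitneyCoeff, sum_mul]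
    refine sum_congr rfl fun I hI => ?_
    rw [(mem_filter.1 hI).2, pow_add]
  simp only [charPoly, Polynomial.eval_finsetSum, Polynomial.eval_mul, Polynomial.eval_C,
    Polynomial.eval_pow, Polynomial.eval_X]
  rw [sum_congr rfl hfiber, sum_fiberwise_eq_sum_filter, whitneySum, powerset_univ]
  exact sum_congr (filter_congr fun I _ => by simp [mem_interPoset]) fun _ _ => rfl

theorem whitneySum_empty (W : Set V) (H : ι → Set V) :
    whitneySum 𝕂 W H ∅ = if W.Nonempty then (-1) ^ affDim 𝕂 W else 0 := by
  simp [whitneySum, sum_filter]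

theorem whitneySum_emptySet (H : ι → Set V) (E : Finset ι) : whitneySum 𝕂 ∅ H E = 0 := by
  simp [whitneySum]

theorem whitneySum_insert (W : Set V) (H : ι → Set V) {E : Finset ι} {j : ι} (hj : j ∉ E) :
    whitneySum 𝕂 W H (insert j E) = whitneySum 𝕂 W H E - whitneySum 𝕂 (W ∩ H j) H E := by
  simp only [whitneySum, sum_filter]
  rw [sum_powerset_insert hj, sub_eq_add_neg, ← sum_neg_distrib]
  congr 1
  refine sum_congr rfl fun I hI => ?_
  have hjI : j ∉ I := fun h => hj (mem_powerset.1 hI h)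
  rw [set_biInter_insert, ← Set.inter_assoc, card_insert_of_notMem hjI, add_right_comm, pow_succ,
    mul_neg_one, apply_ite Neg.neg, neg_zero]

end Whitney

section Hyperplane

variable {𝕂 V : Type*} [Field 𝕂] [AddCommGroup V] [Module 𝕂 V]

theorem affDim_coe (K : AffineSubspace 𝕂 V) :
    affDim 𝕂 (K : Set V) = Module.finrank 𝕂 K.direction := by
  rw [affDim, AffineSubspace.affineSpan_coe]

theorem Submodule.finrank_inf_ker_add_one {W : Submodule 𝕂 V} [FiniteDimensional 𝕂 W]
    {f : V →ₗ[𝕂] 𝕂} (hWf : ¬ W ≤ LinearMap.ker f) :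
    Module.finrank 𝕂 (W ⊓ LinearMap.ker f : Submodule 𝕂 V) + 1 = Module.finrank 𝕂 W := by
  have hf : f.domRestrict W ≠ 0 := fun h => hWf fun v hv => LinearMap.congr_fun h ⟨v, hv⟩
  rw [← Module.Dual.finrank_ker_add_one_of_ne_zero hf, LinearMap.ker_domRestrict,
    ← (Submodule.comapSubtypeEquivOfLe (inf_le_left : W ⊓ LinearMap.ker f ≤ W)).finrank_eq,
    Submodule.comap_inf, Submodule.comap_subtype_self, top_inf_eq]

theorem exists_affineSubspace_inter_hyperplane [FiniteDimensional 𝕂 V] (K : AffineSubspace 𝕂 V)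
    {f : V →ₗ[𝕂] 𝕂} {c : 𝕂} (hne : ((K : Set V) ∩ {x | f x = c}).Nonempty)
    (hK : ¬ (K : Set V) ⊆ {x | f x = c}) :
    ∃ K' : AffineSubspace 𝕂 V, (K' : Set V) = (K : Set V) ∩ {x | f x = c} ∧
      affDim 𝕂 (K' : Set V) + 1 = affDim 𝕂 (K : Set V) := by
  obtain ⟨z, hzK, hzc : f z = c⟩ := hne
  obtain ⟨w, hwK, hwc : f w ≠ c⟩ := Set.not_subset.1 hK
  refine ⟨K ⊓ AffineSubspace.mk' z (LinearMap.ker f), ?_, ?_⟩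
  · ext x
    simp [AffineSubspace.mem_inf_iff, hzc, sub_eq_zero]
  · rw [affDim_coe, affDim_coe, AffineSubspace.direction_inf_of_mem hzK
      (AffineSubspace.self_mem_mk' z _), AffineSubspace.direction_mk']
    refine Submodule.finrank_inf_ker_add_one fun h => hwc ?_
    simpa [sub_eq_zero, hzc] using h (AffineSubspace.vsub_mem_direction hwK hzK)

end Hyperplane

section SignCell

variable {V ι : Type*} [AddCommGroup V] [Module ℝ V]

theorem Convex.exists_mem_apply_eq {C : Set V} (hC : Convex ℝ C) (f : V →ₗ[ℝ] ℝ) {x y : V}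
    (hx : x ∈ C) (hy : y ∈ C) {c : ℝ} (hxc : f x < c) (hcy : c < f y) : ∃ z ∈ C, f z = c :=
  (convex_iff_ordConnected.1 (hC.linear_image f)).out (Set.mem_image_of_mem f hx)
    (Set.mem_image_of_mem f hy) ⟨hxc.le, hcy.le⟩

theorem ite_nonempty_sides_eq {C : Set V} (hC : Convex ℝ C) (f : V →ₗ[ℝ] ℝ) (c : ℝ)
    (hsplit : (C ∩ {x | f x = c}).Nonempty →
      (C ∩ {x | c < f x}).Nonempty ∧ (C ∩ {x | f x < c}).Nonempty) :
    (if (C ∩ {x | c < f x}).Nonempty then 1 else 0) +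
      (if (C ∩ {x | f x < c}).Nonempty then 1 else 0) =
    (if C.Nonempty then 1 else 0) + if (C ∩ {x | f x = c}).Nonempty then 1 else 0 := by
  have hcross : (C ∩ {x | c < f x}).Nonempty → (C ∩ {x | f x < c}).Nonempty →
      (C ∩ {x | f x = c}).Nonempty := fun ⟨y, hy, hcy⟩ ⟨x, hx, hxc⟩ =>
    hC.exists_mem_apply_eq f hx hy hxc hcy
  have hcover : C.Nonempty → (C ∩ {x | c < f x}).Nonempty ∨ (C ∩ {x | f x < c}).Nonempty ∨
      (C ∩ {x | f x = c}).Nonempty := fun ⟨x, hx⟩ => by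
    rcases lt_trichotomy (f x) c with h | h | h
    exacts [Or.inr (Or.inl ⟨x, hx, h⟩), Or.inr (Or.inr ⟨x, hx, h⟩), Or.inl ⟨x, hx, h⟩]
  have hsub : ∀ S : Set V, (C ∩ S).Nonempty → C.Nonempty := fun _ h =>
    h.mono Set.inter_subset_left
  split_ifs <;> simp_all

variable (α : ι → V →ₗ[ℝ] ℝ) (b : ι → ℝ)

def signCell (K : Set V) (E P : Finset ι) : Set V :=
  {x ∈ K | ∀ i ∈ E, if i ∈ P then b i < α i x else α i x < b i}

noncomputable def cellCount (K : Set V) (E : Finset ι) : ℕ :=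
  #{P ∈ E.powerset | (signCell α b K E P).Nonempty}

variable {α b}

theorem signCell_subset {K : Set V} {E P : Finset ι} : signCell α b K E P ⊆ K :=
  fun _ hx => hx.1

theorem signCell_inter {K S : Set V} {E P : Finset ι} :
    signCell α b (K ∩ S) E P = signCell α b K E P ∩ S := by
  ext x
  simp only [signCell, Set.mem_ofPred_eq, Set.mem_inter_iff]
  tauto

theorem convex_signCell {K : Set V} (hK : Convex ℝ K) (E P : Finset ι) :
    Convex ℝ (signCell α b K E P) := by
  have : signCell α b K E P =
      K ∩ ⋂ i ∈ E, if i ∈ P then {x | b i < α i x} else {x | α i x < b i} := by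
    ext x
    simp only [signCell, Set.mem_ofPred_eq, Set.mem_inter_iff, Set.mem_iInter]
    refine and_congr_right fun _ => forall₂_congr fun i _ => ?_
    split_ifs <;> rfl
  rw [this]
  refine hK.inter (convex_iInter₂ fun i _ => ?_)
  split_ifs
  exacts [convex_halfSpace_gt (α i).isLinear _, convex_halfSpace_lt (α i).isLinear _]

theorem signCell_insert_insert {K : Set V} {E P : Finset ι} {j : ι} (hj : j ∉ E) :
    signCell α b K (insert j E) (insert j P) = signCell α b K E P ∩ {x | b j < α j x} := by
  ext x
  have hP : ∀ i ∈ E, (i ∈ insert j P ↔ i ∈ P) := fun i hi => by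
    simp [show i ≠ j by rintro rfl; exact hj hi]
  simp only [signCell, Set.mem_ofPred_eq, Set.mem_inter_iff, forall_mem_insert,
    if_pos (mem_insert_self j P)]
  rw [forall₂_congr fun i hi => Iff.of_eq (if_congr (hP i hi) rfl rfl)]
  tauto

theorem signCell_insert {K : Set V} {E P : Finset ι} {j : ι} (hjP : j ∉ P) :
    signCell α b K (insert j E) P = signCell α b K E P ∩ {x | α j x < b j} := by
  ext x
  simp only [signCell, Set.mem_ofPred_eq, Set.mem_inter_iff, forall_mem_insert, if_neg hjP]
  tauto

theorem eventually_mem_signCell {K : Set V} {E P : Finset ι} {z v : V}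
    (hz : z ∈ signCell α b K E P) (hv : ∀ t : ℝ, z + t • v ∈ K) :
    ∀ᶠ t in 𝓝 (0 : ℝ), z + t • v ∈ signCell α b K E P := by
  have hcont : ∀ i, Continuous fun t : ℝ => α i (z + t • v) := fun i => by
    simp only [map_add, map_smul, smul_eq_mul]
    fun_prop
  have hE : ∀ i ∈ E, ∀ᶠ t in 𝓝 (0 : ℝ),
      if i ∈ P then b i < α i (z + t • v) else α i (z + t • v) < b i := by
    intro i hi
    have h0 := (hcont i).tendsto 0
    simp only [zero_smul, add_zero] at h0
    have hzi := hz.2 i hi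
    split_ifs at hzi ⊢
    exacts [h0.eventually_const_lt hzi, h0.eventually_lt_const hzi]
  filter_upwards [(Filter.eventually_all_finset E).2 hE] with t ht using ⟨hv t, ht⟩

theorem signCell_sides_nonempty (K : AffineSubspace ℝ V) {E P : Finset ι} {j : ι}
    (hKj : ¬ (K : Set V) ⊆ {x | α j x = b j}) {z : V}
    (hz : z ∈ signCell α b K E P) (hzj : α j z = b j) :
    (signCell α b K E P ∩ {x | b j < α j x}).Nonempty ∧
      (signCell α b K E P ∩ {x | α j x < b j}).Nonempty := by
  obtain ⟨w, hwK, hwj : α j w ≠ b j⟩ := Set.not_subset.1 hKj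
  set v := (α j (w - z))⁻¹ • (w - z)
  have hv : α j v = 1 := by
    rw [map_smul, smul_eq_mul, inv_mul_cancel₀]
    rwa [map_sub, hzj, sub_ne_zero]
  have hline : ∀ t : ℝ, z + t • v ∈ K := fun t => by
    rw [add_comm]
    exact AffineSubspace.vadd_mem_of_mem_direction (Submodule.smul_mem _ _
      (Submodule.smul_mem _ _ (AffineSubspace.vsub_mem_direction hwK hz.1))) hz.1
  have hαt : ∀ t : ℝ, α j (z + t • v) = b j + t := fun t => by
    rw [map_add, map_smul, hv, hzj, smul_eq_mul, mul_one]
  have hnear := eventually_mem_signCell hz hline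
  obtain ⟨s, hs, hspos⟩ := ((hnear.filter_mono nhdsWithin_le_nhds).and
    (self_mem_nhdsWithin (s := Set.Ioi 0))).exists
  obtain ⟨t, ht, htneg⟩ := ((hnear.filter_mono nhdsWithin_le_nhds).and
    (self_mem_nhdsWithin (s := Set.Iio 0))).exists
  refine ⟨⟨_, hs, ?_⟩, ⟨_, ht, ?_⟩⟩
  · show b j < α j (z + s • v)
    rw [hαt]
    linarith
  · show α j (z + t • v) < b j
    rw [hαt]
    linarith

theorem cellCount_insert (K : AffineSubspace ℝ V) {E : Finset ι} {j : ι} (hj : j ∉ E)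
    (hKj : ¬ (K : Set V) ⊆ {x | α j x = b j}) :
    cellCount α b K (insert j E) =
      cellCount α b K E + cellCount α b ((K : Set V) ∩ {x | α j x = b j}) E := by
  simp only [cellCount, card_filter]
  rw [sum_powerset_insert hj, add_comm, ← sum_add_distrib, ← sum_add_distrib]
  refine sum_congr rfl fun P hP => ?_
  have hjP : j ∉ P := fun h => hj (mem_powerset.1 hP h)
  rw [signCell_insert_insert hj, signCell_insert hjP, signCell_inter]
  exact ite_nonempty_sides_eq ((convex_signCell K.convex) E P) (α j) (b j)
    fun ⟨z, hz, hzj⟩ => signCell_sides_nonempty K hKj hz hzj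

theorem cellCount_insert_of_subset {K : Set V} {E : Finset ι} {j : ι}
    (hKj : K ⊆ {x | α j x = b j}) : cellCount α b K (insert j E) = 0 := by
  refine card_eq_zero.2 (filter_eq_empty_iff.2 fun P _ => Set.not_nonempty_iff_eq_empty.2 ?_)
  refine Set.eq_empty_of_forall_notMem fun x hx => ?_
  have hxj := hx.2 j (mem_insert_self j E)
  rw [hKj hx.1] at hxj
  split_ifs at hxj <;> exact lt_irrefl _ hxj

theorem cellCount_emptySet (E : Finset ι) : cellCount α b ∅ E = 0 := by
  simp [cellCount, signCell]

theorem cellCount_empty (K : Set V) : cellCount α b K ∅ = if K.Nonempty then 1 else 0 := by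
  simp [cellCount, signCell, apply_ite]

end SignCell

theorem cellCount_eq_neg_one_pow_mul_whitneySum {V ι : Type*} [AddCommGroup V] [Module ℝ V]
    [FiniteDimensional ℝ V] (α : ι → V →ₗ[ℝ] ℝ) (b : ι → ℝ) (E : Finset ι)
    (K : AffineSubspace ℝ V) :
    (cellCount α b K E : ℤ) =
      (-1) ^ affDim ℝ (K : Set V) * whitneySum ℝ K (fun i => {x | α i x = b i}) E := by
  induction E using Finset.induction_on generalizing K with
  | empty =>
    rw [cellCount_empty, whitneySum_empty]
    split_ifs
    · rw [← mul_pow, neg_one_mul, neg_neg, one_pow, Nat.cast_one]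
    · simp
  | insert j E hj ih =>
    rw [whitneySum_insert _ _ hj]
    by_cases hKj : (K : Set V) ⊆ {x | α j x = b j}
    · rw [cellCount_insert_of_subset hKj, Set.inter_eq_left.2 hKj, sub_self, mul_zero,
        Nat.cast_zero]
    rw [cellCount_insert K hj hKj, Nat.cast_add, ih K, mul_sub, sub_eq_add_neg]
    congr 1
    rcases ((K : Set V) ∩ {x | α j x = b j}).eq_empty_or_nonempty with hempty | hne
    · rw [hempty, cellCount_emptySet, whitneySum_emptySet]
      simp
    obtain ⟨K', hK'coe, hdim⟩ := exists_affineSubspace_inter_hyperplane K hne hKj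
    rw [← hK'coe, ih K', ← hdim, pow_succ]
    ring

theorem connectedComponentIn_eq_of_iUnion_eq {X κ : Type*} [TopologicalSpace X] {U : Set X}
    {c : κ → Set X} (hopen : ∀ k, IsOpen (c k)) (hconn : ∀ k, IsPreconnected (c k))
    (hdisj : Pairwise (Function.onFun Disjoint c)) (hcover : ⋃ k, c k = U) ⦃k : κ⦄ ⦃x : X⦄
    (hx : x ∈ c k) : connectedComponentIn U x = c k := by
  have hkU : c k ⊆ U := hcover ▸ Set.subset_iUnion c k
  refine subset_antisymm ?_ ((hconn k).subset_connectedComponentIn hx hkU)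
  refine isPreconnected_connectedComponentIn.subset_left_of_subset_union (hopen k)
    (isOpen_biUnion fun k' (_ : k' ≠ k) => hopen k')
    (Set.disjoint_iUnion₂_right.2 fun _ hk' => hdisj (Ne.symm hk')) (fun y hy => ?_)
    ⟨x, mem_connectedComponentIn (hkU hx), hx⟩
  obtain ⟨k', hk'⟩ := Set.mem_iUnion.1 (hcover ▸ connectedComponentIn_subset U x hy)
  by_cases h : k' = k
  · exact Or.inl (h ▸ hk')
  · exact Or.inr (Set.mem_biUnion h hk')

section Chambers

variable {V ι : Type*} [AddCommGroup V] [Module ℝ V] [Fintype ι] {α : ι → V →ₗ[ℝ] ℝ}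
  {b : ι → ℝ}

theorem mem_signCell_univ_iff {P : Finset ι} {x : V} :
    x ∈ signCell α b Set.univ univ P ↔
      (∀ i, α i x ≠ b i) ∧ P = ({i | b i < α i x} : Finset ι) := by
  simp only [signCell, Set.mem_ofPred_eq, Set.mem_univ, true_and, mem_univ, forall_const,
    Finset.ext_iff, mem_filter, ← forall_and]
  refine forall_congr' fun i => ?_
  split_ifs with hi
  · exact ⟨fun h => ⟨h.ne', iff_of_true hi h⟩, fun h => h.2.1 hi⟩
  · exact ⟨fun h => ⟨h.ne, iff_of_false hi h.not_gt⟩,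
      fun h => lt_of_le_of_ne (not_lt.1 (mt h.2.2 hi)) h.1⟩

theorem chambersOf_eq_image_signCell [TopologicalSpace V] [IsTopologicalAddGroup V]
    [ContinuousSMul ℝ V] (hα : ∀ i, Continuous (α i)) :
    chambersOf (fun i => {x | α i x = b i}) =
      signCell α b Set.univ univ '' {P | (signCell α b Set.univ univ P).Nonempty} := by
  have hcover : ⋃ P, signCell α b Set.univ univ P = (⋃ i, {x | α i x = b i})ᶜ := by
    ext x
    simp [mem_signCell_univ_iff]
  have hopen : ∀ P, IsOpen (signCell α b Set.univ univ P) := fun P => by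
    have : signCell α b Set.univ univ P =
        ⋂ i, {x | if i ∈ P then b i < α i x else α i x < b i} := by
      ext x
      simp [signCell]
    rw [this]
    refine isOpen_iInter_of_finite fun i => ?_
    by_cases hi : i ∈ P <;> simp only [hi, if_true, if_false]
    exacts [isOpen_lt continuous_const (hα i), isOpen_lt (hα i) continuous_const]
  have hdisj : Pairwise (Function.onFun Disjoint (signCell α b Set.univ univ)) :=
    fun P Q hPQ => Set.disjoint_left.2 fun x hP hQ =>
      hPQ ((mem_signCell_univ_iff.1 hP).2.trans (mem_signCell_univ_iff.1 hQ).2.symm)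
  have hcomp := connectedComponentIn_eq_of_iUnion_eq hopen
    (fun P => (convex_signCell convex_univ univ P).isPreconnected) hdisj hcover
  ext C
  constructor
  · rintro ⟨x, hx, rfl⟩
    obtain ⟨P, hP⟩ := Set.mem_iUnion.1 (hcover ▸ hx)
    exact ⟨P, ⟨x, hP⟩, (hcomp hP).symm⟩
  · rintro ⟨P, ⟨x, hx⟩, rfl⟩
    exact ⟨x, hcover ▸ Set.mem_iUnion_of_mem P hx, (hcomp hx).symm⟩

theorem card_chambersOf_eq_cellCount [TopologicalSpace V] [IsTopologicalAddGroup V]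
    [ContinuousSMul ℝ V] (hα : ∀ i, Continuous (α i)) :
    Nat.card (chambersOf fun i => {x | α i x = b i}) = cellCount α b Set.univ univ := by
  have hinj : Set.InjOn (signCell α b Set.univ univ)
      {P | (signCell α b Set.univ univ P).Nonempty} := fun P ⟨x, hx⟩ Q _ hPQ =>
    (mem_signCell_univ_iff.1 hx).2.trans (mem_signCell_univ_iff.1 (hPQ ▸ hx)).2.symm
  rw [chambersOf_eq_image_signCell hα, Nat.card_coe_set_eq, hinj.ncard_image,
    cellCount, powerset_univ, ← Set.ncard_coe_finset]
  simp

end Chambers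

theorem card_chambers_eq_charPoly_eval_general {ℓ n : ℕ}
    (H : Fin n → Set (Fin ℓ → ℝ))
    (hH : ∀ i, IsAffineHyperplane ℝ (H i)) :
    (Nat.card (chambersOf H) : ℤ)
      = (-1 : ℤ) ^ ℓ * (charPoly ℝ Set.univ H).eval (-1) := by
  choose α b hα hHα using hH
  obtain rfl : H = fun i => {x | α i x = b i} := funext hHα
  have hproper : ∀ i, ¬ Set.univ ⊆ {x | α i x = b i} := fun i h =>
    hα i <| LinearMap.ext fun x => by
      have h0 : α i 0 = b i := h (Set.mem_univ 0)
      have hx : α i x = b i := h (Set.mem_univ x)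
      rw [hx, ← h0, map_zero, LinearMap.zero_apply]
  have hdim : affDim ℝ (Set.univ : Set (Fin ℓ → ℝ)) = ℓ := by
    rw [affDim, AffineSubspace.span_univ, AffineSubspace.direction_top, finrank_top,
      Module.finrank_fin_fun]
  have hcount := cellCount_eq_neg_one_pow_mul_whitneySum α b univ ⊤
  rw [AffineSubspace.top_coe, hdim] at hcount
  rw [card_chambersOf_eq_cellCount fun i => (α i).continuous_of_finiteDimensional, hcount,
    charPoly_eval_neg_one hproper]

/-- **Zaslavsky's theorem.** The number of chambers of a real arrangement
`𝒜 = {H 1, …, H n}` in `ℝ^ℓ` equals `(-1)^ℓ χ(𝒜, -1)`. -/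
theorem card_chambers_eq_charPoly_eval {ℓ n : ℕ}
    (H : Fin n → Set (Fin ℓ → ℝ))
    (hH : ∀ i, IsAffineHyperplane ℝ (H i))
    (hinj : Function.Injective H) :
    (Nat.card (chambersOf H) : ℤ)
      = (-1 : ℤ) ^ ℓ * (charPoly ℝ Set.univ H).eval (-1) :=
  card_chambers_eq_charPoly_eval_general H hH
end

section
/- Let H ⊆ ℝ^ℓ be an affine hyperplane, H⁺ one of the two open half-spaces bounded by H, and F ⊆ ℝ^ℓ an affine subspace. Let d(x, S) denote the Euclidean distance from x to a set S. Then U = {x ∈ H⁺ : d(x, F) < d(x, H)} is an open convex subset of ℝ^ℓ. -/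
/-!
On the open half-space `{g > 0}` the distance to the hyperplane `{g = 0}` is the affine function
`g / ‖v‖`, where `v` is the gradient of `g`, while the distance to the convex set `F` is a convex
function. Hence `U` is a strict sublevel set of a convex function on a convex set, and it is open
because both distance functions and `g` are continuous.
-/

open Metric Set
open scoped RealInnerProductSpace

theorem convexOn_infDist {E : Type*} [NormedAddCommGroup E] [NormedSpace ℝ E] {s : Set E}
    (hs : Convex ℝ s) : ConvexOn ℝ univ (infDist · s) := by
  rcases s.eq_empty_or_nonempty with rfl | hne
  · simpa only [infDist_empty] using convexOn_const (0 : ℝ) convex_univ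
  refine ⟨convex_univ, fun x _ y _ a b ha hb hab => le_of_forall_pos_le_add fun ε hε => ?_⟩
  obtain ⟨px, hpx, hx⟩ := (infDist_lt_iff hne).1 (lt_add_of_pos_right (infDist x s) hε)
  obtain ⟨py, hpy, hy⟩ := (infDist_lt_iff hne).1 (lt_add_of_pos_right (infDist y s) hε)
  calc infDist (a • x + b • y) s
      ≤ dist (a • x + b • y) (a • px + b • py) := infDist_le_dist_of_mem (hs hpx hpy ha hb hab)
    _ ≤ dist (a • x) (a • px) + dist (b • y) (b • py) := dist_add_add_le _ _ _ _
    _ = a * dist x px + b * dist y py := by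
      rw [dist_smul₀, dist_smul₀, Real.norm_of_nonneg ha, Real.norm_of_nonneg hb]
    _ ≤ a * (infDist x s + ε) + b * (infDist y s + ε) := by gcongr
    _ = a • infDist x s + b • infDist y s + ε := by
      rw [smul_eq_mul, smul_eq_mul]; linear_combination ε * hab

section Hyperplane

variable {E : Type*} [NormedAddCommGroup E] [InnerProductSpace ℝ E]
  (g : E →ᵃ[ℝ] ℝ) {v : E} (hgv : ∀ y, g.linear y = ⟪v, y⟫)
include hgv

theorem infDist_setOf_eq_zero_eq_abs_div_norm (hv : v ≠ 0) (x : E) :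
    infDist x {y | g y = 0} = |g x| / ‖v‖ := by
  have hg_sub : ∀ y z, g y - g z = ⟪v, y - z⟫ := fun y z => by
    rw [← hgv, ← vsub_eq_sub y z, g.linearMap_vsub]; rfl
  have hv' : 0 < ‖v‖ := norm_pos_iff.2 hv
  set foot := x - (g x / ‖v‖ ^ 2) • v
  have hfoot : foot ∈ {y | g y = 0} := by
    have := hg_sub x foot
    rw [sub_sub_cancel, inner_smul_right, real_inner_self_eq_norm_sq,
      div_mul_cancel₀ _ (pow_ne_zero 2 hv'.ne')] at this
    show g foot = 0; linarith
  refine le_antisymm ((infDist_le_dist_of_mem hfoot).trans_eq ?_)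
    ((le_infDist ⟨foot, hfoot⟩).2 fun y (hy : g y = 0) => ?_)
  · rw [dist_eq_norm, sub_sub_cancel, norm_smul, Real.norm_eq_abs, abs_div, abs_pow, abs_norm]
    field_simp
  · rw [div_le_iff₀ hv', ← sub_zero (g x), ← hy, hg_sub, dist_eq_norm, mul_comm]
    exact abs_real_inner_le_norm v (x - y)

theorem convex_setOf_pos_and_infDist_lt (hv : v ≠ 0) {s : Set E} (hs : Convex ℝ s) :
    Convex ℝ {x | 0 < g x ∧ infDist x s < infDist x {y | g y = 0}} := by
  have hpos : Convex ℝ {x | 0 < g x} := (convex_Ioi 0).affine_preimage g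
  have hgap : ConvexOn ℝ {x | 0 < g x} fun x => infDist x s - ‖v‖⁻¹ • g x :=
    ((convexOn_infDist hs).subset (subset_univ _) hpos).sub
      ((((LinearMap.id.concaveOn convex_univ).comp_affineMap g).subset (subset_univ _) hpos).smul
        (inv_nonneg.2 (norm_nonneg v)))
  convert hgap.convex_lt 0 using 1
  ext x
  exact and_congr_right fun hx => by
    rw [infDist_setOf_eq_zero_eq_abs_div_norm g hgv hv, abs_of_pos hx, sub_neg, smul_eq_mul,
      div_eq_inv_mul]

end Hyperplane

theorem isOpen_and_convex_halfspace_dist_lt_general {ℓ : ℕ}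
    (g : EuclideanSpace ℝ (Fin ℓ) →ᵃ[ℝ] ℝ) (hg : g.linear ≠ 0)
    (F : AffineSubspace ℝ (EuclideanSpace ℝ (Fin ℓ))) :
    IsOpen {x : EuclideanSpace ℝ (Fin ℓ) |
        0 < g x ∧
          Metric.infDist x (F : Set (EuclideanSpace ℝ (Fin ℓ)))
            < Metric.infDist x {y | g y = 0}} ∧
      Convex ℝ {x : EuclideanSpace ℝ (Fin ℓ) |
        0 < g x ∧
          Metric.infDist x (F : Set (EuclideanSpace ℝ (Fin ℓ)))
            < Metric.infDist x {y | g y = 0}} := by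
  set v := (InnerProductSpace.toDual ℝ _).symm g.linear.toContinuousLinearMap
  have hgv : ∀ y, g.linear y = ⟪v, y⟫ := fun y => by
    rw [InnerProductSpace.toDual_symm_apply]; rfl
  have hv : v ≠ 0 := fun h => hg (LinearMap.ext fun y => by rw [hgv, h, inner_zero_left]; rfl)
  exact ⟨(isOpen_lt continuous_const g.continuous_of_finiteDimensional).inter
      (isOpen_lt (continuous_infDist_pt _) (continuous_infDist_pt _)),
    convex_setOf_pos_and_infDist_lt g hgv hv F.convex⟩

/-- Let `H ⊆ ℝ^ℓ` be an affine hyperplane (the zero locus of a nonconstant affine-linear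
function `g`), let `H⁺ = {x : 0 < g x}` be one of the two open half-spaces bounded by `H`,
and let `F` be a (nonempty) affine subspace of `ℝ^ℓ`.  Then
`U = {x ∈ H⁺ : d(x, F) < d(x, H)}` is an open convex subset of `ℝ^ℓ`. -/
theorem isOpen_and_convex_halfspace_dist_lt {ℓ : ℕ}
    (g : EuclideanSpace ℝ (Fin ℓ) →ᵃ[ℝ] ℝ) (hg : g.linear ≠ 0)
    (F : AffineSubspace ℝ (EuclideanSpace ℝ (Fin ℓ)))
    (hF : (F : Set (EuclideanSpace ℝ (Fin ℓ))).Nonempty) :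
    IsOpen {x : EuclideanSpace ℝ (Fin ℓ) |
        0 < g x ∧
          Metric.infDist x (F : Set (EuclideanSpace ℝ (Fin ℓ)))
            < Metric.infDist x {y | g y = 0}} ∧
      Convex ℝ {x : EuclideanSpace ℝ (Fin ℓ) |
        0 < g x ∧
          Metric.infDist x (F : Set (EuclideanSpace ℝ (Fin ℓ)))
            < Metric.infDist x {y | g y = 0}} :=
  isOpen_and_convex_halfspace_dist_lt_general g hg F
end
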